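/- arXiv:1302.5333 — 2 statements merged into one kernel-verified Lean document; each statement's English description precedes it below -/
import Mathlib

section
/- Fix real constants K > 0 and δ > 1 and let η(x,y) = (x − K·log y, y^δ). Let x₀ ∈ ℝ, 0 < P₁ < P₂ < 2π, y_* ∈ (0,1), and let m ∈ ℤ satisfy x₀ − P₁ − 2mπ ≤ (K/δ)·log y_*. Set a = (x₀ − P₁ − 2mπ)/K and b = (x₀ − P₂ − 2mπ)/K. Then b < a < 0, and for every natural number n, the points exp(a − 2nπ/K) and exp(b − 2nπ/K) lie in (0,1) and η(x₀, exp(a − 2nπ/K)) = (P₁ + 2(m+n)π, exp(δ·(a − 2nπ/K))) and η(x₀, exp(b − 2nπ/K)) = (P₂ + 2(m+n)π, exp(δ·(b − 2nπ/K))), where both second coordinates are positive and at most y_*. -/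
/-- The first hit map η(x,y) = (x − K·log y, y^δ) from In(v) to Out(w). -/
noncomputable def eta (K δ : ℝ) (p : ℝ × ℝ) : ℝ × ℝ :=
  (p.1 - K * Real.log p.2, p.2 ^ δ)

/-- Core computation of item (iii) of Proposition 5.2: with a = (x₀−P₁−2mπ)/K and
b = (x₀−P₂−2mπ)/K one has b < a < 0, the endpoints exp(a−2nπ/K), exp(b−2nπ/K) of the
intervals I_n lie in (0,1), and their images under η sit above the angles P₁, P₂ (mod 2π)
at positive heights at most y_*. -/
theorem stmt_6 (K δ : ℝ) (hK : 0 < K) (hδ : 1 < δ) (x₀ P₁ P₂ ystar : ℝ) (m : ℤ)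
    (hP₁ : 0 < P₁) (hP₁₂ : P₁ < P₂) (hP₂ : P₂ < 2 * Real.pi)
    (hystar : ystar ∈ Set.Ioo (0:ℝ) 1)
    (hm : x₀ - P₁ - 2 * (m : ℝ) * Real.pi ≤ K / δ * Real.log ystar) :
    (x₀ - P₂ - 2 * (m : ℝ) * Real.pi) / K < (x₀ - P₁ - 2 * (m : ℝ) * Real.pi) / K ∧
    (x₀ - P₁ - 2 * (m : ℝ) * Real.pi) / K < 0 ∧
    ∀ n : ℕ,
      Real.exp ((x₀ - P₁ - 2 * (m : ℝ) * Real.pi) / K - 2 * (n : ℝ) * Real.pi / K) ∈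
        Set.Ioo (0:ℝ) 1 ∧
      Real.exp ((x₀ - P₂ - 2 * (m : ℝ) * Real.pi) / K - 2 * (n : ℝ) * Real.pi / K) ∈
        Set.Ioo (0:ℝ) 1 ∧
      eta K δ (x₀,
          Real.exp ((x₀ - P₁ - 2 * (m : ℝ) * Real.pi) / K - 2 * (n : ℝ) * Real.pi / K)) =
        (P₁ + 2 * ((m : ℝ) + (n : ℝ)) * Real.pi,
          Real.exp (δ * ((x₀ - P₁ - 2 * (m : ℝ) * Real.pi) / K -
            2 * (n : ℝ) * Real.pi / K))) ∧
      eta K δ (x₀,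
          Real.exp ((x₀ - P₂ - 2 * (m : ℝ) * Real.pi) / K - 2 * (n : ℝ) * Real.pi / K)) =
        (P₂ + 2 * ((m : ℝ) + (n : ℝ)) * Real.pi,
          Real.exp (δ * ((x₀ - P₂ - 2 * (m : ℝ) * Real.pi) / K -
            2 * (n : ℝ) * Real.pi / K))) ∧
      0 < Real.exp (δ * ((x₀ - P₁ - 2 * (m : ℝ) * Real.pi) / K -
            2 * (n : ℝ) * Real.pi / K)) ∧
      Real.exp (δ * ((x₀ - P₁ - 2 * (m : ℝ) * Real.pi) / K -
            2 * (n : ℝ) * Real.pi / K)) ≤ ystar ∧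
      0 < Real.exp (δ * ((x₀ - P₂ - 2 * (m : ℝ) * Real.pi) / K -
            2 * (n : ℝ) * Real.pi / K)) ∧
      Real.exp (δ * ((x₀ - P₂ - 2 * (m : ℝ) * Real.pi) / K -
            2 * (n : ℝ) * Real.pi / K)) ≤ ystar := by
  have hδ0 : (0:ℝ) < δ := by linarith
  have hpi := Real.pi_pos
  have hlog : Real.log ystar < 0 := Real.log_neg hystar.1 hystar.2
  set a := (x₀ - P₁ - 2 * (m : ℝ) * Real.pi) / K with ha
  set b := (x₀ - P₂ - 2 * (m : ℝ) * Real.pi) / K with hb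
  have hba : b < a := by
    exact div_lt_div_of_pos_right (by linarith) hK
  have hδa : δ * a ≤ Real.log ystar := by
    rw [ha, ← mul_div_assoc, div_le_iff₀ hK]
    have : δ * (x₀ - P₁ - 2 * (m : ℝ) * Real.pi) ≤ δ * (K / δ * Real.log ystar) :=
      mul_le_mul_of_nonneg_left hm hδ0.le
    calc δ * (x₀ - P₁ - 2 * (m : ℝ) * Real.pi) ≤ δ * (K / δ * Real.log ystar) := this
      _ = Real.log ystar * K := by field_simp
  have ha0 : a < 0 := by
    have : δ * a < 0 := lt_of_le_of_lt hδa hlog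
    nlinarith
  refine ⟨hba, ha0, fun n => ?_⟩
  have hn : (0:ℝ) ≤ 2 * (n : ℝ) * Real.pi / K := by positivity
  have hau : a - 2 * (n : ℝ) * Real.pi / K < 0 := by linarith
  have hbu : b - 2 * (n : ℝ) * Real.pi / K < 0 := by linarith
  have heta : ∀ t : ℝ, eta K δ (x₀, Real.exp t) = (x₀ - K * t, Real.exp (δ * t)) := by
    intro t
    simp only [eta, Real.log_exp]
    rw [← Real.exp_mul, mul_comm t δ]
  have key : ∀ c : ℝ, x₀ - K * (c / K - 2 * (n : ℝ) * Real.pi / K) =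
      x₀ - c + 2 * (n : ℝ) * Real.pi := by
    intro c; field_simp; ring
  refine ⟨⟨Real.exp_pos _, Real.exp_lt_one_iff.2 hau⟩,
    ⟨Real.exp_pos _, Real.exp_lt_one_iff.2 hbu⟩, ?_, ?_, Real.exp_pos _, ?_,
    Real.exp_pos _, ?_⟩
  · rw [heta, ha, key]; push_cast; ring_nf
  · rw [heta, hb, key]; push_cast; ring_nf
  · rw [← Real.exp_log hystar.1]
    apply Real.exp_le_exp.2
    have : δ * (2 * (n : ℝ) * Real.pi / K) ≥ 0 := by positivity
    nlinarith
  · rw [← Real.exp_log hystar.1]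
    apply Real.exp_le_exp.2
    have h1 : δ * (2 * (n : ℝ) * Real.pi / K) ≥ 0 := by positivity
    have : δ * b ≤ δ * a := mul_le_mul_of_nonneg_left hba.le hδ0.le
    nlinarith
end

section
/- Fix real constants K > 0 and δ > 1 and let η(x,y) = (x − K·log y, y^δ). Let x₀ ∈ ℝ, 0 < P₁ < P₂ < 2π, y_* ∈ (0,1), and let m ∈ ℤ satisfy x₀ − P₁ − 2mπ ≤ (K/δ)·log y_*. Set a = (x₀ − P₁ − 2mπ)/K and b = (x₀ − P₂ − 2mπ)/K. Let g : ℝ → ℝ be continuous and 2π-periodic with g(P₁) = g(P₂) = 0, and suppose g(x_m) = y_* for some x_m with P₁ < x_m < P₂. Then for every natural number n there exist y' ≠ y'' in the interval [exp(b − 2nπ/K), exp(a − 2nπ/K)] such that (y')^δ = g(x₀ − K·log y') and (y'')^δ = g(x₀ − K·log y''); that is, the image under η of the vertical interval I_n = {x₀} × [exp(b − 2nπ/K), exp(a − 2nπ/K)] crosses the graph of g at least twice. -/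
/-- Item (iii) of Proposition 5.2: the image under η(x,y) = (x − K·log y, y^δ) of each
vertical interval I_n = {x₀} × [exp(b−2nπ/K), exp(a−2nπ/K)] crosses the graph of g
(the curve W^s(v) ∩ Out(w)) at least twice. -/
theorem stmt_7 (K δ : ℝ) (hK : 0 < K) (hδ : 1 < δ) (x₀ P₁ P₂ ystar xm : ℝ) (m : ℤ)
    (hP₁ : 0 < P₁) (hP₁₂ : P₁ < P₂) (hP₂ : P₂ < 2 * Real.pi)
    (hystar : ystar ∈ Set.Ioo (0:ℝ) 1)
    (hm : x₀ - P₁ - 2 * (m : ℝ) * Real.pi ≤ K / δ * Real.log ystar)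
    (g : ℝ → ℝ) (hg : Continuous g) (hper : ∀ x : ℝ, g (x + 2 * Real.pi) = g x)
    (hgP₁ : g P₁ = 0) (hgP₂ : g P₂ = 0)
    (hxm₁ : P₁ < xm) (hxm₂ : xm < P₂) (hgxm : g xm = ystar) :
    ∀ n : ℕ, ∃ y' y'' : ℝ, y' ≠ y'' ∧
      y' ∈ Set.Icc
        (Real.exp ((x₀ - P₂ - 2 * (m : ℝ) * Real.pi) / K - 2 * (n : ℝ) * Real.pi / K))
        (Real.exp ((x₀ - P₁ - 2 * (m : ℝ) * Real.pi) / K - 2 * (n : ℝ) * Real.pi / K)) ∧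
      y'' ∈ Set.Icc
        (Real.exp ((x₀ - P₂ - 2 * (m : ℝ) * Real.pi) / K - 2 * (n : ℝ) * Real.pi / K))
        (Real.exp ((x₀ - P₁ - 2 * (m : ℝ) * Real.pi) / K - 2 * (n : ℝ) * Real.pi / K)) ∧
      y' ^ δ = g (x₀ - K * Real.log y') ∧
      y'' ^ δ = g (x₀ - K * Real.log y'') := by
  intro n
  have hπ := Real.pi_pos
  have hK0 : K ≠ 0 := ne_of_gt hK
  have hδ0 : (0:ℝ) < δ := by linarith
  set ya := Real.exp ((x₀ - P₁ - 2 * (m : ℝ) * Real.pi) / K - 2 * (n : ℝ) * Real.pi / K) with hya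
  set yb := Real.exp ((x₀ - P₂ - 2 * (m : ℝ) * Real.pi) / K - 2 * (n : ℝ) * Real.pi / K) with hyb
  set ym := Real.exp ((x₀ - xm - 2 * (m : ℝ) * Real.pi) / K - 2 * (n : ℝ) * Real.pi / K) with hym
  have hbm : yb < ym := by
    apply Real.exp_lt_exp.2
    have : (x₀ - P₂ - 2 * (m : ℝ) * Real.pi) < (x₀ - xm - 2 * (m : ℝ) * Real.pi) := by linarith
    have := div_lt_div_of_pos_right this hK
    linarith
  have hma : ym < ya := by
    apply Real.exp_lt_exp.2
    have : (x₀ - xm - 2 * (m : ℝ) * Real.pi) < (x₀ - P₁ - 2 * (m : ℝ) * Real.pi) := by linarith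
    have := div_lt_div_of_pos_right this hK
    linarith
  have hyb0 : 0 < yb := Real.exp_pos _
  -- periodicity for integer multiples
  have hper' : Function.Periodic g (2 * Real.pi) := hper
  have hgk : ∀ x : ℝ, g (x + 2 * ((m : ℝ) + (n : ℝ)) * Real.pi) = g x := by
    intro x
    have h := (hper'.int_mul (m + (n : ℤ))) x
    have : x + 2 * ((m : ℝ) + (n : ℝ)) * Real.pi = x + ((m + (n : ℤ) : ℤ) : ℝ) * (2 * Real.pi) := by
      push_cast; ring
    rw [this, h]
  -- F
  set F : ℝ → ℝ := fun y => y ^ δ - g (x₀ - K * Real.log y) with hF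
  have hFcont : ContinuousOn F (Set.Icc yb ya) := by
    apply ContinuousOn.sub
    · exact ContinuousOn.rpow_const continuousOn_id
        (fun x hx => Or.inl (ne_of_gt (lt_of_lt_of_le hyb0 hx.1)))
    · apply hg.comp_continuousOn
      apply ContinuousOn.sub continuousOn_const
      apply ContinuousOn.mul continuousOn_const
      intro x hx
      exact (Real.continuousAt_log (ne_of_gt (lt_of_lt_of_le hyb0 hx.1))).continuousWithinAt
  have keyarg : ∀ t : ℝ, x₀ - K * ((x₀ - t - 2 * (m : ℝ) * Real.pi) / K - 2 * (n : ℝ) * Real.pi / K)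
      = t + 2 * ((m : ℝ) + (n : ℝ)) * Real.pi := by
    intro t; field_simp; ring
  have hFa : 0 < F ya := by
    have : g (x₀ - K * Real.log ya) = 0 := by
      rw [hya, Real.log_exp, keyarg, hgk, hgP₁]
    simp only [hF, this, sub_zero]
    exact Real.rpow_pos_of_pos (Real.exp_pos _) _
  have hFb : 0 < F yb := by
    have : g (x₀ - K * Real.log yb) = 0 := by
      rw [hyb, Real.log_exp, keyarg, hgk, hgP₂]
    simp only [hF, this, sub_zero]
    exact Real.rpow_pos_of_pos (Real.exp_pos _) _
  have hFm : F ym < 0 := by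
    have hgym : g (x₀ - K * Real.log ym) = ystar := by
      rw [hym, Real.log_exp, keyarg, hgk, hgxm]
    have hlt : ym ^ δ < ystar := by
      have hpow : ym ^ δ =
          Real.exp (((x₀ - xm - 2 * (m : ℝ) * Real.pi) / K - 2 * (n : ℝ) * Real.pi / K) * δ) := by
        rw [hym, ← Real.exp_mul]
      rw [hpow, ← Real.exp_log hystar.1]
      apply Real.exp_lt_exp.2
      have hn0 : (0:ℝ) ≤ (n : ℝ) := Nat.cast_nonneg n
      have h1 : x₀ - xm - 2 * (m : ℝ) * Real.pi - 2 * (n : ℝ) * Real.pi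
          < x₀ - P₁ - 2 * (m : ℝ) * Real.pi := by nlinarith
      have h2 : x₀ - xm - 2 * (m : ℝ) * Real.pi - 2 * (n : ℝ) * Real.pi
          < K / δ * Real.log ystar := lt_of_lt_of_le h1 hm
      have h3 : (x₀ - xm - 2 * (m : ℝ) * Real.pi) / K - 2 * (n : ℝ) * Real.pi / K
          = (x₀ - xm - 2 * (m : ℝ) * Real.pi - 2 * (n : ℝ) * Real.pi) / K := by ring
      rw [h3, div_mul_eq_mul_div, div_lt_iff₀ hK]
      have h4 := mul_lt_mul_of_pos_right h2 hδ0
      have h5 : K / δ * Real.log ystar * δ = Real.log ystar * K := by field_simp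
      linarith
    simp only [hF, hgym]
    linarith
  -- IVT on [yb, ym]
  have h1 : (0:ℝ) ∈ Set.Icc (F ym) (F yb) := ⟨le_of_lt hFm, le_of_lt hFb⟩
  have hsub1 : Set.Icc yb ym ⊆ Set.Icc yb ya := Set.Icc_subset_Icc le_rfl (le_of_lt hma)
  have hsub2 : Set.Icc ym ya ⊆ Set.Icc yb ya := Set.Icc_subset_Icc (le_of_lt hbm) le_rfl
  obtain ⟨y'', hy''mem, hy''⟩ :=
    intermediate_value_Icc' (le_of_lt hbm) (hFcont.mono hsub1) h1
  have h2 : (0:ℝ) ∈ Set.Icc (F ym) (F ya) := ⟨le_of_lt hFm, le_of_lt hFa⟩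
  obtain ⟨y', hy'mem, hy'⟩ :=
    intermediate_value_Icc (le_of_lt hma) (hFcont.mono hsub2) h2
  have hy''ne : y'' ≠ ym := fun h => by rw [h] at hy''; linarith [hy'', hFm]
  have hy'ne : y' ≠ ym := fun h => by rw [h] at hy'; linarith [hy', hFm]
  have hne : y' ≠ y'' := by
    intro h
    have h1' : y'' < ym := lt_of_le_of_ne hy''mem.2 hy''ne
    have h2' : ym < y' := lt_of_le_of_ne hy'mem.1 (Ne.symm hy'ne)
    rw [h] at h2'; linarith
  refine ⟨y', y'', hne, hsub2 hy'mem, hsub1 hy''mem, ?_, ?_⟩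
  · have := hy'; simp only [hF] at this; linarith
  · have := hy''; simp only [hF] at this; linarith
end
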